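/- arXiv:1812.11712 — 2 statements merged into one kernel-verified Lean document; each statement's English description precedes it below -/
import Mathlib

section
/- Let n ≥ 1, let a_1,…,a_n be positive integers with A = Σ_{i=1}^n a_i, let 0 < y < 1/2, and let p = (p_0,…,p_{n+1}) be a probability vector on {-1,1}^{n+2}. Define a' = (a_1, …, a_n, −A/2, −A/2), c = 2a', d = (a_1 − y, a_2, …, a_n, −A/2 + y/2, −A/2 + y/2), and e = (a_1 + y, a_2, …, a_n, −A/2 − y/2, −A/2 − y/2), and for v ∈ ℝ^{n+2} let K_{μ_p}(v) = E_{x ∼ μ_p}[|v·x|] denote the Khintchine constant of v with respect to μ_p. Then Pr_{x ∼ μ_p}[a'·x = 0] = ( K_{μ_p}(d) + K_{μ_p}(e) − K_{μ_p}(c) ) / (2y) + (p_0 + p_{n+1}) / Λ(p). -/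
/-! Write `d = a' + y u`, `e = a' - y u` and `c = 2 a'` with `u = (-1, 0, …, 0, 1/2, 1/2)`.
Since `a'·x` is an integer and `|y u·x| ≤ 2y < 1`, the sum `|d·x| + |e·x| - |c·x|` vanishes
unless `a'·x = 0`, where it equals `2y |u·x|`. On that hyperplane `|u·x| = 1` except at the two
constant vectors, whose masses under `μ_p` are `p_{n+1}/Λ(p)` and `p_0/Λ(p)`. -/

open Finset

noncomputable section

/-- `sgn z` is `1` if `z ≥ 0` and `-1` otherwise. -/
def sgn (z : ℝ) : ℝ := if 0 ≤ z then 1 else -1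

/-- The ±1 real value encoded by a Boolean coordinate (`true ↦ 1`, `false ↦ -1`). -/
def chi (b : Bool) : ℝ := if b then 1 else -1

/-- `wt x` is the number of coordinates of `x ∈ {-1,1}^n` equal to `1`. -/
def wt {n : ℕ} (x : Fin n → Bool) : ℤ :=
  ((Finset.univ.filter fun i => x i = true).card : ℤ)

/-- Inner product `w · x` of a real vector `w` with a ±1 vector `x`. -/
def dotp {n : ℕ} (w : Fin n → ℝ) (x : Fin n → Bool) : ℝ :=
  ∑ i, w i * chi (x i)

/-- The `i`-th semivalue of `f : {-1,1}^n → {-1,1}` with respect to the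
probability vector `p` (indexed by `ℤ`, with `p t = 0` out of range):
`∑_{x : x_i = -1} p_{wt x} f(x) x_i + ∑_{x : x_i = 1} p_{wt x - 1} f(x) x_i`. -/
def semivalue {n : ℕ} (p : ℤ → ℝ) (f : (Fin n → Bool) → ℝ) (i : Fin n) : ℝ :=
  ∑ x : Fin n → Bool, (if x i then p (wt x - 1) else p (wt x)) * f x * chi (x i)

/-- `μ'_p(x) = p_{wt x} + p_{wt x - 1}`. -/
def mu' {n : ℕ} (p : ℤ → ℝ) (x : Fin n → Bool) : ℝ := p (wt x) + p (wt x - 1)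

/-- The normalizing factor `Λ(p) = ∑_x μ'_p(x)`. -/
def lam (n : ℕ) (p : ℤ → ℝ) : ℝ := ∑ x : Fin n → Bool, mu' p x

/-- The probability distribution `μ_p(x) = μ'_p(x)/Λ(p)`. -/
def mu {n : ℕ} (p : ℤ → ℝ) (x : Fin n → Bool) : ℝ := mu' p x / lam n p

open scoped Classical

section

variable {n : ℕ}

lemma abs_add_add_abs_sub_of_abs_le {a b : ℝ} (h : |b| ≤ |a|) : |a + b| + |a - b| = 2 * |a| := by
  cases abs_cases a <;> cases abs_cases b <;> cases abs_cases (a + b) <;>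
    cases abs_cases (a - b) <;> linarith

lemma abs_intCast_add_add_abs_sub_sub_abs_two_mul (k : ℤ) {t y : ℝ} (ht : |t| ≤ 2)
    (hy0 : 0 < y) (hy1 : y < 1 / 2) :
    |k + y * t| + |k - y * t| - |2 * (k : ℝ)| = if k = 0 then 2 * y * |t| else 0 := by
  split_ifs with hk
  · simp only [hk, Int.cast_zero, zero_add, zero_sub, abs_neg, abs_mul, abs_of_pos hy0, mul_zero,
      abs_zero, sub_zero]
    ring
  · have hyt : |y * t| ≤ |(k : ℝ)| := calc
      |y * t| ≤ y * 2 := by rw [abs_mul, abs_of_pos hy0]; gcongr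
      _ ≤ 1 := by linarith
      _ ≤ |(k : ℝ)| := by exact_mod_cast Int.one_le_abs hk
    rw [abs_add_add_abs_sub_of_abs_le hyt, abs_mul, abs_two, sub_self]

lemma chi_not (b : Bool) : chi (!b) = -chi b := by cases b <;> simp [chi]

lemma snoc_eq_const_iff {α : Type*} (x : Fin n → α) (b c : α) :
    (Fin.snoc x b : Fin (n + 1) → α) = (fun _ => c) ↔ x = (fun _ => c) ∧ b = c := by
  simp [funext_iff, Fin.forall_fin_succ']

lemma mu_const_true {p : ℤ → ℝ} (hp : p (n + 1) = 0) :
    mu p (fun _ : Fin (n + 1) => true) = p n / lam (n + 1) p := by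
  simp [mu, mu', wt, hp]

lemma mu_const_false {p : ℤ → ℝ} (hp : p (-1) = 0) :
    mu p (fun _ : Fin n => false) = p 0 / lam n p := by
  simp [mu, mu', wt, hp]

lemma dotp_add (v w : Fin n → ℝ) (x : Fin n → Bool) : dotp (v + w) x = dotp v x + dotp w x := by
  simp only [dotp, Pi.add_apply, add_mul, sum_add_distrib]

lemma dotp_sub (v w : Fin n → ℝ) (x : Fin n → Bool) : dotp (v - w) x = dotp v x - dotp w x := by
  simp only [dotp, Pi.sub_apply, sub_mul, sum_sub_distrib]

lemma dotp_smul (r : ℝ) (w : Fin n → ℝ) (x : Fin n → Bool) : dotp (r • w) x = r * dotp w x := by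
  simp only [dotp, Pi.smul_apply, smul_eq_mul, mul_assoc, mul_sum]

lemma dotp_not (w : Fin n → ℝ) (x : Fin n → Bool) : dotp w (fun i => !x i) = -dotp w x := by
  simp only [dotp, chi_not, mul_neg, sum_neg_distrib]

lemma dotp_snoc (w : Fin (n + 1) → ℝ) (x : Fin n → Bool) (b : Bool) :
    dotp w (Fin.snoc x b) = dotp (Fin.init w) x + w (Fin.last n) * chi b := by
  simp [dotp, Fin.sum_univ_castSucc, Fin.init]

lemma exists_dotp_intCast_eq (w : Fin n → ℤ) (x : Fin n → Bool) :
    ∃ k : ℤ, dotp (fun i => (w i : ℝ)) x = k :=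
  ⟨∑ i, w i * if x i then 1 else -1, by
    push_cast
    refine sum_congr rfl fun i _ => ?_
    cases x i <;> simp [chi]⟩

lemma dotp_eq_sum_iff {w : Fin n → ℝ} (hw : ∀ i, 0 < w i) (x : Fin n → Bool) :
    dotp w x = ∑ i, w i ↔ ∀ i, x i = true := by
  have hle : ∀ i ∈ univ, w i * chi (x i) ≤ w i := by
    intro i _
    cases x i <;> simp [chi, (hw i).le]
  rw [dotp, sum_eq_sum_iff_of_le hle]
  refine forall_congr' fun i => ?_
  cases x i <;> simp [chi, CharZero.neg_eq_self_iff, (hw i).ne']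

lemma dotp_eq_neg_sum_iff {w : Fin n → ℝ} (hw : ∀ i, 0 < w i) (x : Fin n → Bool) :
    dotp w x = -∑ i, w i ↔ ∀ i, x i = false := by
  rw [← neg_inj, ← dotp_not, neg_neg, dotp_eq_sum_iff hw]
  simp

/-- The vector `a' = (a_1, …, a_n, -A/2, -A/2)`. -/
def balancedVec (a : Fin n → ℤ) : Fin (n + 2) → ℝ :=
  Fin.snoc (Fin.snoc (fun i => (a i : ℝ)) (-((∑ i, a i : ℤ) : ℝ) / 2)) (-((∑ i, a i : ℤ) : ℝ) / 2)

/-- The direction `(d - a') / y = (a' - e) / y = (-1, 0, …, 0, 1/2, 1/2)`. -/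
def shiftVec (n : ℕ) : Fin (n + 2) → ℝ :=
  Fin.snoc (Fin.snoc (fun i : Fin n => if (i : ℕ) = 0 then -1 else 0) (1 / 2)) (1 / 2)

lemma balancedVec_apply (a : Fin n → ℤ) (i : Fin (n + 2)) :
    balancedVec a i = if h : (i : ℕ) < n then (a ⟨i, h⟩ : ℝ) else -((∑ i, a i : ℤ) : ℝ) / 2 := by
  induction i using Fin.lastCases with
  | last => simp [balancedVec]
  | cast i => induction i using Fin.lastCases with
    | last => simp [balancedVec]
    | cast i => simp [balancedVec]

lemma shiftVec_apply (i : Fin (n + 2)) :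
    shiftVec n i = if (i : ℕ) < n then (if (i : ℕ) = 0 then -1 else 0) else 1 / 2 := by
  induction i using Fin.lastCases with
  | last => simp [shiftVec]
  | cast i => induction i using Fin.lastCases with
    | last => simp [shiftVec]
    | cast i => simp [shiftVec]

lemma dotp_balancedVec_snoc_snoc (a : Fin n → ℤ) (x : Fin n → Bool) (b b' : Bool) :
    dotp (balancedVec a) (Fin.snoc (Fin.snoc x b) b') =
      dotp (fun i => (a i : ℝ)) x - ((∑ i, a i : ℤ) : ℝ) / 2 * (chi b + chi b') := by
  simp only [balancedVec, dotp_snoc, Fin.init_snoc, Fin.snoc_last]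
  ring

lemma dotp_shiftVec_snoc_snoc (hn : 0 < n) (x : Fin n → Bool) (b b' : Bool) :
    dotp (shiftVec n) (Fin.snoc (Fin.snoc x b) b') = -chi (x ⟨0, hn⟩) + (chi b + chi b') / 2 := by
  simp only [shiftVec, dotp_snoc, Fin.init_snoc, Fin.snoc_last]
  rw [dotp, sum_eq_single ⟨0, hn⟩ (fun i _ hi => by simp [Fin.ext_iff.not.mp hi]) (by simp)]
  simp only [↓reduceIte, neg_mul, one_mul]
  ring

lemma exists_dotp_balancedVec_eq_intCast (a : Fin n → ℤ) (x : Fin (n + 2) → Bool) :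
    ∃ k : ℤ, dotp (balancedVec a) x = k := by
  induction x using Fin.snocCases with | snoc x b' =>
  induction x using Fin.snocCases with | snoc x b =>
  obtain ⟨k, hk⟩ := exists_dotp_intCast_eq a x
  rw [dotp_balancedVec_snoc_snoc, hk]
  cases b <;> cases b'
  · exact ⟨k + ∑ i, a i, by simp only [chi, Bool.false_eq_true, ↓reduceIte]; push_cast; ring⟩
  · exact ⟨k, by simp [chi]⟩
  · exact ⟨k, by simp [chi]⟩
  · exact ⟨k - ∑ i, a i, by simp only [chi, ↓reduceIte]; push_cast; ring⟩

lemma abs_dotp_shiftVec_le (hn : 0 < n) (x : Fin (n + 2) → Bool) :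
    |dotp (shiftVec n) x| ≤ 2 := by
  induction x using Fin.snocCases with | snoc x b' =>
  induction x using Fin.snocCases with | snoc x b =>
  rw [dotp_shiftVec_snoc_snoc hn, abs_le]
  cases x ⟨0, hn⟩ <;> cases b <;> cases b' <;> norm_num [chi]

lemma dotp_balancedVec_const_true (a : Fin n → ℤ) :
    dotp (balancedVec a) (fun _ => true) = 0 := by
  rw [← (snoc_eq_const_iff _ _ _).2 ⟨(snoc_eq_const_iff _ _ _).2 ⟨rfl, rfl⟩, rfl⟩,
    dotp_balancedVec_snoc_snoc]
  simp only [dotp, chi, ↓reduceIte, mul_one, Int.cast_sum]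
  ring

lemma dotp_balancedVec_const_false (a : Fin n → ℤ) :
    dotp (balancedVec a) (fun _ => false) = 0 := by
  rw [← (snoc_eq_const_iff _ _ _).2 ⟨(snoc_eq_const_iff _ _ _).2 ⟨rfl, rfl⟩, rfl⟩,
    dotp_balancedVec_snoc_snoc]
  simp only [dotp, chi, Bool.false_eq_true, ↓reduceIte, mul_neg, mul_one, sum_neg_distrib,
    Int.cast_sum]
  ring

/-- On the hyperplane `a'·x = 0`, the last two coordinates of `x` either differ, so that
`|u·x| = |x_1| = 1`, or agree, and then positivity of the `a_i` forces `x` to be constant. -/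
lemma abs_dotp_shiftVec_of_dotp_balancedVec_eq_zero (hn : 0 < n) {a : Fin n → ℤ}
    (ha : ∀ i, 0 < a i) {x : Fin (n + 2) → Bool} (hx : dotp (balancedVec a) x = 0) :
    |dotp (shiftVec n) x| = if x = (fun _ => true) ∨ x = (fun _ => false) then 0 else 1 := by
  have ha' : ∀ i, 0 < (a i : ℝ) := fun i => Int.cast_pos.mpr (ha i)
  induction x using Fin.snocCases with | snoc x b' =>
  induction x using Fin.snocCases with | snoc x b =>
  rw [dotp_balancedVec_snoc_snoc, Int.cast_sum] at hx
  rw [dotp_shiftVec_snoc_snoc hn]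
  simp only [snoc_eq_const_iff]
  cases b <;> cases b'
  · have hx : ∀ i, x i = false := (dotp_eq_neg_sum_iff ha' x).1 <| by
      simp only [chi, Bool.false_eq_true, ↓reduceIte] at hx
      linarith
    simp [hx, chi, funext_iff]
  · cases x ⟨0, hn⟩ <;> norm_num [chi]
  · cases x ⟨0, hn⟩ <;> norm_num [chi]
  · have hx : ∀ i, x i = true := (dotp_eq_sum_iff ha' x).1 <| by
      simp only [chi, ↓reduceIte] at hx
      linarith
    simp [hx, chi, funext_iff]

lemma abs_dotp_add_abs_dotp_sub_sub_abs_dotp_two_smul (hn : 0 < n) {a : Fin n → ℤ}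
    (ha : ∀ i, 0 < a i) {y : ℝ} (hy0 : 0 < y) (hy1 : y < 1 / 2) (x : Fin (n + 2) → Bool) :
    |dotp (balancedVec a + y • shiftVec n) x| + |dotp (balancedVec a - y • shiftVec n) x|
        - |dotp ((2 : ℝ) • balancedVec a) x| =
      2 * y * ((if dotp (balancedVec a) x = 0 then 1 else 0)
        - (if x = (fun _ => true) then 1 else 0) - (if x = (fun _ => false) then 1 else 0)) := by
  obtain ⟨k, hk⟩ := exists_dotp_balancedVec_eq_intCast a x
  rw [dotp_add, dotp_sub, dotp_smul, dotp_smul, hk,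
    abs_intCast_add_add_abs_sub_sub_abs_two_mul k (abs_dotp_shiftVec_le hn x) hy0 hy1]
  by_cases hk0 : k = 0
  · subst hk0
    rw [if_pos rfl, abs_dotp_shiftVec_of_dotp_balancedVec_eq_zero hn ha (by rw [hk, Int.cast_zero])]
    by_cases hT : x = fun _ => true
    · simp [hT, funext_iff]
    by_cases hF : x = fun _ => false
    · simp [hF, funext_iff]
    simp [hT, hF]
  · have hx : dotp (balancedVec a) x ≠ 0 := by rw [hk]; exact_mod_cast hk0
    have hT : x ≠ fun _ => true := fun h => hx (h ▸ dotp_balancedVec_const_true a)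
    have hF : x ≠ fun _ => false := fun h => hx (h ▸ dotp_balancedVec_const_false a)
    simp [hk0, hT, hF]

end

theorem stmt6_general (n : ℕ) (hn : 1 ≤ n) (a : Fin n → ℤ) (ha : ∀ i, 0 < a i)
    (A : ℤ) (hA : A = ∑ i, a i)
    (y : ℝ) (hy0 : 0 < y) (hy1 : y < 1 / 2)
    (p : ℤ → ℝ)
    (hp_out : ∀ t : ℤ, (t < 0 ∨ (n : ℤ) + 2 ≤ t) → p t = 0)
    (a' c d e : Fin (n + 2) → ℝ)
    (ha' : ∀ i : Fin (n + 2), a' i =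
      if h : (i : ℕ) < n then (a ⟨i, h⟩ : ℝ) else -(A : ℝ) / 2)
    (hc : ∀ i : Fin (n + 2), c i = 2 * a' i)
    (hd : ∀ i : Fin (n + 2), d i =
      if h : (i : ℕ) < n then (a ⟨i, h⟩ : ℝ) - (if (i : ℕ) = 0 then y else 0)
      else -(A : ℝ) / 2 + y / 2)
    (he : ∀ i : Fin (n + 2), e i =
      if h : (i : ℕ) < n then (a ⟨i, h⟩ : ℝ) + (if (i : ℕ) = 0 then y else 0)
      else -(A : ℝ) / 2 - y / 2) :
    (∑ x : Fin (n + 2) → Bool, if dotp a' x = 0 then mu p x else 0)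
      = ((∑ x : Fin (n + 2) → Bool, mu p x * |dotp d x|)
          + (∑ x : Fin (n + 2) → Bool, mu p x * |dotp e x|)
          - (∑ x : Fin (n + 2) → Bool, mu p x * |dotp c x|)) / (2 * y)
        + (p 0 + p ((n : ℤ) + 1)) / lam (n + 2) p := by
  have ha'_eq : a' = balancedVec a := funext fun i => by rw [ha', balancedVec_apply, hA]
  have hd_eq : d = balancedVec a + y • shiftVec n := funext fun i => by
    rw [hd, Pi.add_apply, Pi.smul_apply, balancedVec_apply, shiftVec_apply, hA]
    split_ifs <;> push_cast <;> ring
  have he_eq : e = balancedVec a - y • shiftVec n := funext fun i => by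
    rw [he, Pi.sub_apply, Pi.smul_apply, balancedVec_apply, shiftVec_apply, hA]
    split_ifs <;> push_cast <;> ring
  have hc_eq : c = (2 : ℝ) • balancedVec a := funext fun i => by rw [hc, ha'_eq]; rfl
  have hsum : ∑ x, mu p x * |dotp d x| + ∑ x, mu p x * |dotp e x| - ∑ x, mu p x * |dotp c x|
      = 2 * y * ((∑ x, if dotp a' x = 0 then mu p x else 0)
        - mu p (fun _ : Fin (n + 2) => true) - mu p (fun _ : Fin (n + 2) => false)) := by
    simp only [← sum_add_distrib, ← sum_sub_distrib, ← mul_add, ← mul_sub, ha'_eq, hd_eq, he_eq,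
      hc_eq, abs_dotp_add_abs_dotp_sub_sub_abs_dotp_two_smul hn ha hy0 hy1]
    simp [mul_sub, mul_sum, sum_sub_distrib, mul_ite, mul_comm _ (2 * y)]
  rw [hsum, mu_const_true (hp_out _ (Or.inr (by push_cast; rfl))),
    mu_const_false (hp_out _ (Or.inl (by norm_num)))]
  field_simp
  push_cast
  ring

theorem stmt6 (n : ℕ) (hn : 1 ≤ n) (a : Fin n → ℤ) (ha : ∀ i, 0 < a i)
    (A : ℤ) (hA : A = ∑ i, a i)
    (y : ℝ) (hy0 : 0 < y) (hy1 : y < 1 / 2)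
    (p : ℤ → ℝ)
    (hp_nonneg : ∀ t : ℤ, 0 ≤ p t)
    (hp_out : ∀ t : ℤ, (t < 0 ∨ (n : ℤ) + 2 ≤ t) → p t = 0)
    (hp_sum : ∑ t ∈ Finset.range (n + 2), ((n + 1).choose t : ℝ) * p (t : ℤ) = 1)
    (a' c d e : Fin (n + 2) → ℝ)
    (ha' : ∀ i : Fin (n + 2), a' i =
      if h : (i : ℕ) < n then (a ⟨i, h⟩ : ℝ) else -(A : ℝ) / 2)
    (hc : ∀ i : Fin (n + 2), c i = 2 * a' i)
    (hd : ∀ i : Fin (n + 2), d i =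
      if h : (i : ℕ) < n then (a ⟨i, h⟩ : ℝ) - (if (i : ℕ) = 0 then y else 0)
      else -(A : ℝ) / 2 + y / 2)
    (he : ∀ i : Fin (n + 2), e i =
      if h : (i : ℕ) < n then (a ⟨i, h⟩ : ℝ) + (if (i : ℕ) = 0 then y else 0)
      else -(A : ℝ) / 2 - y / 2) :
    (∑ x : Fin (n + 2) → Bool, if dotp a' x = 0 then mu p x else 0)
      = ((∑ x : Fin (n + 2) → Bool, mu p x * |dotp d x|)
          + (∑ x : Fin (n + 2) → Bool, mu p x * |dotp e x|)
          - (∑ x : Fin (n + 2) → Bool, mu p x * |dotp c x|)) / (2 * y)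
        + (p 0 + p ((n : ℤ) + 1)) / lam (n + 2) p :=
  stmt6_general n hn a ha A hA y hy0 hy1 p hp_out a' c d e ha' hc hd he
end
end

section
/- Let n ≥ 1, let p = (p_0,…,p_{n-1}) be a probability vector, let w, v ∈ ℝ^n with Σ_{i=1}^n w_i = Σ_{i=1}^n v_i, let θ ∈ ℝ, and set f(x) = sign(w·x − θ), g(x) = sign(v·x − θ). If \tilde f^p(i) = \tilde g^p(i) for all i ∈ {1,…,n}, then Σ_{x ∈ {-1,1}^n} μ'_p(x) · |f(x) − g(x)| · ( |w·x − θ| + |v·x − θ| ) = 0. -/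
open Finset

noncomputable section

/-!
Write `a = w·x - θ` and `b = v·x - θ`. Because `f` and `g` are the signs of `a` and `b`, one has
`(f - g)(a - b) = |f - g| (|a| + |b|)` pointwise, so the sum equals
`∑_x μ'_p(x) (f - g)(x) ((w - v)·x) = ∑_i (w_i - v_i) ∑_x μ'_p(x) (f - g)(x) x_i`.
Splitting `μ'_p(x) = p_{wt x} + p_{wt x - 1}`, each inner sum is `2 (f̃^p(i) - g̃^p(i)) = 0` plus a
quantity independent of `i`, which `∑_i (w_i - v_i) = 0` annihilates.
-/

lemma sgn_sub_sgn_mul_sub (a b : ℝ) :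
    (sgn a - sgn b) * (a - b) = |sgn a - sgn b| * (|a| + |b|) := by
  unfold sgn
  split_ifs with ha hb hb
  · simp
  · rw [abs_of_nonneg ha, abs_of_neg (not_le.mp hb)]; norm_num; ring
  · rw [abs_of_neg (not_le.mp ha), abs_of_nonneg hb]; norm_num; ring
  · simp

lemma dotp_sub_dotp {n : ℕ} (w v : Fin n → ℝ) (x : Fin n → Bool) :
    dotp w x - dotp v x = dotp (w - v) x := by
  simp only [dotp, Pi.sub_apply, sub_mul, sum_sub_distrib]

lemma semivalue_sub {n : ℕ} (p : ℤ → ℝ) (f g : (Fin n → Bool) → ℝ) (i : Fin n) :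
    semivalue p (fun x => f x - g x) i = semivalue p f i - semivalue p g i := by
  simp only [semivalue, ← sum_sub_distrib]
  exact sum_congr rfl fun x _ => by ring

lemma sum_mu'_mul_chi {n : ℕ} (p : ℤ → ℝ) (h : (Fin n → Bool) → ℝ) (i : Fin n) :
    ∑ x, mu' p x * h x * chi (x i)
      = 2 * semivalue p h i + ∑ x, (p (wt x) - p (wt x - 1)) * h x := by
  rw [semivalue, mul_sum, ← sum_add_distrib]
  refine sum_congr rfl fun x _ => ?_
  unfold mu' chi
  by_cases hx : x i <;> simp only [hx, if_true, if_false, Bool.false_eq_true] <;> ring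

lemma sum_mu'_mul_dotp_eq_zero {n : ℕ} (p : ℤ → ℝ) (h : (Fin n → Bool) → ℝ)
    (hh : ∀ i, semivalue p h i = 0) (u : Fin n → ℝ) (hu : ∑ i, u i = 0) :
    ∑ x, mu' p x * h x * dotp u x = 0 := by
  set c := ∑ x, (p (wt x) - p (wt x - 1)) * h x
  calc ∑ x, mu' p x * h x * dotp u x
      = ∑ i, u i * ∑ x, mu' p x * h x * chi (x i) := by
        simp only [dotp, mul_sum]
        rw [sum_comm]
        exact sum_congr rfl fun i _ => sum_congr rfl fun x _ => by ring
    _ = (∑ i, u i) * c := by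
        rw [sum_mul]
        exact sum_congr rfl fun i _ => by rw [sum_mu'_mul_chi, hh, mul_zero, zero_add]
    _ = 0 := by rw [hu, zero_mul]

theorem stmt14_general (n : ℕ) (p : ℤ → ℝ)
    (w v : Fin n → ℝ) (hwv : ∑ i, w i = ∑ i, v i) (θ : ℝ)
    (f g : (Fin n → Bool) → ℝ)
    (hf : ∀ x, f x = sgn (dotp w x - θ))
    (hg : ∀ x, g x = sgn (dotp v x - θ))
    (hsv : ∀ i : Fin n, semivalue p f i = semivalue p g i) :
    ∑ x : Fin n → Bool,
        mu' p x * |f x - g x| * (|dotp w x - θ| + |dotp v x - θ|) = 0 := by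
  have hpointwise : ∀ x, mu' p x * |f x - g x| * (|dotp w x - θ| + |dotp v x - θ|)
      = mu' p x * (f x - g x) * dotp (w - v) x := fun x => by
    rw [← dotp_sub_dotp, ← sub_sub_sub_cancel_right (dotp w x) (dotp v x) θ, hf, hg,
      mul_assoc, mul_assoc, sgn_sub_sgn_mul_sub]
  simp only [hpointwise]
  refine sum_mu'_mul_dotp_eq_zero p _ (fun i => ?_) (w - v) ?_
  · rw [semivalue_sub, hsv, sub_self]
  · simp only [Pi.sub_apply, sum_sub_distrib, hwv, sub_self]

theorem stmt14 (n : ℕ) (hn : 1 ≤ n) (p : ℤ → ℝ)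
    (hp_nonneg : ∀ t : ℤ, 0 ≤ p t)
    (hp_out : ∀ t : ℤ, (t < 0 ∨ (n : ℤ) ≤ t) → p t = 0)
    (hp_sum : ∑ t ∈ Finset.range n, ((n - 1).choose t : ℝ) * p (t : ℤ) = 1)
    (w v : Fin n → ℝ) (hwv : ∑ i, w i = ∑ i, v i) (θ : ℝ)
    (f g : (Fin n → Bool) → ℝ)
    (hf : ∀ x, f x = sgn (dotp w x - θ))
    (hg : ∀ x, g x = sgn (dotp v x - θ))
    (hsv : ∀ i : Fin n, semivalue p f i = semivalue p g i) :
    ∑ x : Fin n → Bool,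
        mu' p x * |f x - g x| * (|dotp w x - θ| + |dotp v x - θ|) = 0 :=
  stmt14_general n p w v hwv θ f g hf hg hsv
end
end
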